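/- (Lemma 2.1, second identity) Let 1 ≤ k < n (with the conventions T_{w_0} = 1 and empty products equal to 1) and let u, σ_1,…,σ_{k−1} be scalar parameters in ℂ(q) with u ≠ σ_j for all j. Then T_{w_{k+1}} T_2(u,σ_{k−1}) T_3(u,σ_{k−2}) ⋯ T_k(u,σ_1) T_{w_k}^{−1} = T_{w_k} T_1(u,σ_{k−1}) T_2(u,σ_{k−2}) ⋯ T_{k−1}(u,σ_1) T_{w_{k−1}}^{−1} T_k in the Hecke algebra H_n. -/

import Mathlib

noncomputable section

open scoped Classical

namespace HeckePaper

abbrev F : Type := RatFunc ℂ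
def q : F := RatFunc.X

inductive Rel : FreeAlgebra F ℕ → FreeAlgebra F ℕ → Prop
  | braid (i : ℕ) : Rel (FreeAlgebra.ι F i * FreeAlgebra.ι F (i + 1) * FreeAlgebra.ι F i)
      (FreeAlgebra.ι F (i + 1) * FreeAlgebra.ι F i * FreeAlgebra.ι F (i + 1))
  | comm (i j : ℕ) (h : i + 1 < j) :
      Rel (FreeAlgebra.ι F i * FreeAlgebra.ι F j) (FreeAlgebra.ι F j * FreeAlgebra.ι F i)
  | quad (i : ℕ) :
      Rel (FreeAlgebra.ι F i * FreeAlgebra.ι F i) (1 + (q - q⁻¹) • FreeAlgebra.ι F i)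

abbrev H : Type := RingQuot Rel
def T (i : ℕ) : H := RingQuot.mkAlgHom F Rel (FreeAlgebra.ι F i)
def cc : F →+* H := algebraMap F H
def Tinv (i : ℕ) : H := T i - (q - q⁻¹) • 1

def y : ℕ → H
  | 0 => 1
  | 1 => 1
  | (k + 2) => T (k + 1) * y (k + 1) * T (k + 1)

def Tdesc : ℕ → H
  | 0 => 1
  | (k + 1) => T (k + 1) * Tdesc k


def Tasc : ℕ → H
  | 0 => 1
  | (k + 1) => Tasc k * T (k + 1)

/-- The reversed-order product `(T_1 ⋯ T_{k-2} T_{k-1})(T_1 ⋯ T_{k-2}) ⋯ (T_1 T_2) T_1`. -/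
def Tw' : ℕ → H
  | 0 => 1
  | (k + 1) => Tasc k * Tw' k

def Tw : ℕ → H
  | 0 => 1
  | (k + 1) => Tw k * Tdesc k

def TT (i : ℕ) (x z : F) : H := (z - x)⁻¹ • (z • T i - x • Tinv i)

/-! ### Tableaux -/

/-- The q-content `q^{2(j-i)}` of a cell `(i,j)` (rows and columns indexed from 0). -/
def qcont (c : ℕ × ℕ) : F := q ^ (2 * ((c.2 : ℤ) - (c.1 : ℤ)))

/-- A standard tableau with `n` cells: `entry k` is the cell (row, column, 0-indexed)
containing the number `k`, for `1 ≤ k ≤ n`.  The requirement that the set of cells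
occupied by `1, …, k` is a Young diagram for each `k` is equivalent to the entries
increasing along rows and down columns. -/
structure StandardTableau (n : ℕ) where
  entry : ℕ → ℕ × ℕ
  injOn : Set.InjOn entry (Set.Icc 1 n)
  lower : ∀ k, k ≤ n → IsLowerSet {c : ℕ × ℕ | ∃ j, 1 ≤ j ∧ j ≤ k ∧ entry j = c}

/-- `sig T k` is the q-content `σ_k` of the cell of `T` containing `k`. -/
def sig {n : ℕ} (T : StandardTableau n) (k : ℕ) : F := qcont (T.entry k)

/-- The standard tableau obtained by removing the cell containing the largest entry. -/
def restrict {n : ℕ} (T : StandardTableau n) : StandardTableau (n - 1) where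
  entry := T.entry
  injOn := T.injOn.mono (Set.Icc_subset_Icc_right (Nat.sub_le n 1))
  lower := fun k hk => T.lower k (hk.trans (Nat.sub_le n 1))

/-- The shape of a standard tableau, as a finite set of cells. -/
def shapeF {n : ℕ} (T : StandardTableau n) : Finset (ℕ × ℕ) := (Finset.Icc 1 n).image T.entry

/-- The shape of a standard tableau, as a Young diagram. -/
def shapeD {n : ℕ} (T : StandardTableau n) : YoungDiagram where
  cells := shapeF T
  isLowerSet := by
    have h := T.lower n le_rfl
    have he : (↑(shapeF T) : Set (ℕ × ℕ)) = {c : ℕ × ℕ | ∃ j, 1 ≤ j ∧ j ≤ n ∧ T.entry j = c} := by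
      ext c
      simp only [shapeF, Finset.coe_image, Set.mem_image, Finset.mem_coe, Finset.mem_Icc,
        Set.mem_setOf_eq]
      constructor
      · rintro ⟨j, ⟨h1, h2⟩, rfl⟩; exact ⟨j, h1, h2, rfl⟩
      · rintro ⟨j, h1, h2, rfl⟩; exact ⟨j, ⟨h1, h2⟩, rfl⟩
    rw [he]; exact h

/-- A cell is addable to a diagram if adjoining it yields again a diagram. -/
def addable (μ : Finset (ℕ × ℕ)) (c : ℕ × ℕ) : Prop :=
  c ∉ μ ∧ IsLowerSet ((↑μ ∪ {c}) : Set (ℕ × ℕ))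

/-- The (finite) set of addable cells of a diagram. -/
def addables (μ : Finset (ℕ × ℕ)) : Finset (ℕ × ℕ) :=
  (Finset.range (μ.card + 1) ×ˢ Finset.range (μ.card + 1)).filter (addable μ)

lemma commute_lin (m : ℕ) (a b c d : F) :
    Commute (cc a * (y m - cc b)) (cc c * (y m - cc d)) := by
  have h1 : ∀ (r : F) (x : H), Commute (cc r) x := fun r x => Algebra.commute_algebraMap_left r x
  have hyd : Commute (y m) (y m - cc d) := (Commute.refl (y m)).sub_right (h1 d (y m)).symm
  have h2 : Commute (y m - cc b) (y m - cc d) := hyd.sub_left (h1 b (y m - cc d))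
  exact (h1 a _).mul_left (((h1 c _).symm).mul_right h2)

/-- The primitive idempotents `E_T` of the Hecke algebras, defined inductively:
`E_T = E_U ∏_{ρ} (y_n - ρ)/(σ_n - ρ)`, the product over the q-contents `ρ` of the
addable cells of the shape of `U` other than the cell of `n`. -/
def Eelt : (n : ℕ) → StandardTableau n → H
  | 0, _ => 1
  | (n + 1), T =>
      Eelt n (restrict T) *
        Finset.noncommProd ((addables (shapeF (restrict T))).erase (T.entry (n + 1)))
          (fun c => cc ((qcont (T.entry (n + 1)) - qcont c)⁻¹) * (y (n + 1) - cc (qcont c)))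
          (by intro a _ b _ _; exact commute_lin (n + 1) _ _ _ _)

/-! ### Hooks and the normalization factor `f(λ)` -/

/-- The quantum integer `[m]_q = (q^m - q^{-m})/(q - q^{-1})`. -/
def qnum (m : ℕ) : F := (q ^ (m : ℤ) - q ^ (-(m : ℤ))) / (q - q⁻¹)

/-- The hook length of the cell `c` of `μ` (cells 0-indexed). -/
def hook (μ : YoungDiagram) (c : ℕ × ℕ) : ℕ := μ.rowLen c.1 + μ.colLen c.2 - c.1 - c.2 - 1

/-- The normalization factor `f(λ) = ∏_{α ∈ λ} q^{c_α} / [h_α]_q`. -/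
def fla (μ : YoungDiagram) : F := ∏ c ∈ μ.cells, (q ^ ((c.2 : ℤ) - (c.1 : ℤ)) / qnum (hook μ c))

/-! ### The function Ψ -/

/-- The inner factor `T_k(u_1,u_{k+1}) T_{k-1}(u_2,u_{k+1}) ⋯ T_1(u_k,u_{k+1})`. -/
def innerProd (k : ℕ) (u : ℕ → F) : H :=
  ((List.range k).map (fun i => TT (k - i) (u (i + 1)) (u (k + 1)))).prod

/-- The function `Ψ(u_1,…,u_n)`. -/
def PsiFun (n : ℕ) (u : ℕ → F) : H :=
  ((List.range (n - 1)).map (fun j => innerProd (j + 1) u)).prod * Ring.inverse (Tw n)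

/-! ### Conditional expectations and the Ocneanu–Markov trace -/

/-- The subalgebra `H_m ⊆ H` generated by `T_1, …, T_{m-1}`. -/
def Hsub (m : ℕ) : Subalgebra F H := Algebra.adjoin F (T '' {i | 1 ≤ i ∧ i + 1 ≤ m})

/-- The defining properties of the family of conditional expectations
`Tr_m : H_m → H_{m-1}` with parameter `Q`; `tr m` represents `Tr_m` (defined on all
of `H`, but its characterizing properties concern the subalgebras `H_m`). -/
structure IsCondExp (Q : F) (tr : ℕ → H →ₗ[F] H) : Prop where
  mem : ∀ m, 1 ≤ m → ∀ z ∈ Hsub m, tr m z ∈ Hsub (m - 1)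
  bimod : ∀ m, 1 ≤ m → ∀ X ∈ Hsub (m - 1), ∀ Y ∈ Hsub (m - 1), ∀ Z ∈ Hsub m,
      tr m (X * Z * Y) = X * tr m Z * Y
  scalar : ∀ m, 1 ≤ m → ∀ X ∈ Hsub (m - 1), tr m X = Q • X
  conj : ∀ m, 1 ≤ m → ∀ X ∈ Hsub m, tr (m + 1) (T m * X * Tinv m) = tr m X
  conj' : ∀ m, 1 ≤ m → ∀ X ∈ Hsub m, tr (m + 1) (Tinv m * X * T m) = tr m X
  genOne : ∀ m, 1 ≤ m → tr (m + 1) (T m) = 1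
  markov : ∀ m, 1 ≤ m → ∀ Z ∈ Hsub (m + 1),
      tr m (tr (m + 1) (T m * Z)) = tr m (tr (m + 1) (Z * T m))

/-- `trComp tr n = Tr_1 ∘ Tr_2 ∘ ⋯ ∘ Tr_n`, the Ocneanu–Markov trace `Tr^{(n)}`
(with values in the scalars `ℂ(q)·1 ⊆ H`). -/
def trComp (tr : ℕ → H →ₗ[F] H) : ℕ → H → H
  | 0 => id
  | (m + 1) => fun x => trComp tr m (tr (m + 1) x)

/-! Since `T_{w_{k+1}} = T_{w_k} (T_k ⋯ T_1)` and the braid relations give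
`(T_k ⋯ T_1) T_{i+1} = T_i (T_k ⋯ T_1)` for `1 ≤ i < k`, moving `T_k ⋯ T_1` to the right through
the product of the `T_{i+1}(u, σ)`, which are combinations of `T_{i+1}` and `1`, lowers every index
by one. The leftover `(T_k ⋯ T_1) T_{w_k}⁻¹` equals `T_{w_{k-1}}⁻¹ T_k`, because
`T_{w_k} = T_{w_{k-1}} (T_{k-1} ⋯ T_1)` and `T_k` commutes with `T_{w_{k-1}}`. -/

theorem _root_.SemiconjBy.list_prod_map {M ι : Type*} [Monoid M] {a : M} {f g : ι → M} :
    ∀ {l : List ι}, (∀ i ∈ l, SemiconjBy a (f i) (g i)) →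
      SemiconjBy a (l.map f).prod (l.map g).prod
  | [], _ => SemiconjBy.one_right a
  | i :: _, h => by
    simpa only [List.map_cons, List.prod_cons] using
      (h i List.mem_cons_self).mul_right
        (SemiconjBy.list_prod_map fun j hj => h j (List.mem_cons_of_mem i hj))

lemma T_mul_self (i : ℕ) : T i * T i = 1 + (q - q⁻¹) • T i := by
  simpa [T] using RingQuot.mkAlgHom_rel F (Rel.quad i)

lemma T_braid (i : ℕ) : T i * T (i + 1) * T i = T (i + 1) * T i * T (i + 1) := by
  simpa [T] using RingQuot.mkAlgHom_rel F (Rel.braid i)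

lemma commute_T_T {i j : ℕ} (h : i + 1 < j) : Commute (T i) (T j) := by
  simpa [T, commute_iff_eq] using RingQuot.mkAlgHom_rel F (Rel.comm i j h)

lemma T_mul_Tinv (i : ℕ) : T i * Tinv i = 1 := by
  rw [Tinv, mul_sub, mul_smul_comm, mul_one, T_mul_self, add_sub_cancel_right]

lemma Tinv_mul_T (i : ℕ) : Tinv i * T i = 1 := by
  rw [Tinv, sub_mul, smul_mul_assoc, one_mul, T_mul_self, add_sub_cancel_right]

lemma isUnit_T (i : ℕ) : IsUnit (T i) :=
  ⟨⟨T i, Tinv i, T_mul_Tinv i, Tinv_mul_T i⟩, rfl⟩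

lemma isUnit_Tdesc (k : ℕ) : IsUnit (Tdesc k) := by
  induction k with
  | zero => exact isUnit_one
  | succ k ih => exact (isUnit_T _).mul ih

lemma isUnit_Tw (k : ℕ) : IsUnit (Tw k) := by
  induction k with
  | zero => exact isUnit_one
  | succ k ih => exact ih.mul (isUnit_Tdesc k)

lemma commute_T_Tdesc {j k : ℕ} (h : k + 1 < j) : Commute (T j) (Tdesc k) := by
  induction k with
  | zero => exact Commute.one_right _
  | succ k ih => exact (commute_T_T h).symm.mul_right (ih (by omega))

lemma commute_T_Tw {j k : ℕ} (h : k < j) : Commute (T j) (Tw k) := by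
  induction k with
  | zero => exact Commute.one_right _
  | succ k ih => exact (ih (by omega)).mul_right (commute_T_Tdesc (by omega))

lemma semiconjBy_Tdesc_T {j k : ℕ} (hj : 1 ≤ j) (hjk : j < k) :
    SemiconjBy (Tdesc k) (T (j + 1)) (T j) := by
  induction k with
  | zero => omega
  | succ k ih =>
    unfold SemiconjBy
    rcases Nat.lt_or_ge j k with hlt | hge
    · rw [Tdesc, mul_assoc, ih hlt, ← mul_assoc, ← (commute_T_T (by omega : j + 1 < k + 1)).eq,
        mul_assoc]
    · obtain rfl : j = k := by omega
      obtain ⟨i, rfl⟩ : ∃ i, j = i + 1 := ⟨j - 1, by omega⟩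
      have hcomm : Commute (T (i + 2)) (Tdesc i) := commute_T_Tdesc (by omega)
      calc Tdesc (i + 2) * T (i + 2)
          = T (i + 2) * T (i + 1) * T (i + 2) * Tdesc i := by
            simp only [Tdesc, mul_assoc, hcomm.eq]
        _ = T (i + 1) * Tdesc (i + 2) := by
            rw [← T_braid]; simp only [Tdesc, mul_assoc]

lemma semiconjBy_TT {a : H} {i j : ℕ} (h : SemiconjBy a (T i) (T j)) (x z : F) :
    SemiconjBy a (TT i x z) (TT j x z) := by
  have hinv : SemiconjBy a (Tinv i) (Tinv j) :=
    h.sub_right ((SemiconjBy.one_right a).smul_right _)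
  exact ((h.smul_right z).sub_right (hinv.smul_right x)).smul_right _

lemma Tw_mul_Tdesc_succ (k : ℕ) : Tw k * Tdesc (k + 1) = T (k + 1) * Tw (k + 1) := by
  rw [Tdesc, ← mul_assoc, ← (commute_T_Tw (Nat.lt_succ_self k)).eq, mul_assoc]
  rfl

lemma Tdesc_succ_mul_inverse_Tw_succ (k : ℕ) :
    Tdesc (k + 1) * Ring.inverse (Tw (k + 1)) = Ring.inverse (Tw k) * T (k + 1) :=
  calc Tdesc (k + 1) * Ring.inverse (Tw (k + 1))
      = Ring.inverse (Tw k) * (Tw k * Tdesc (k + 1)) * Ring.inverse (Tw (k + 1)) := by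
        rw [← mul_assoc, Ring.inverse_mul_cancel _ (isUnit_Tw k), one_mul]
    _ = Ring.inverse (Tw k) * T (k + 1) := by
        rw [Tw_mul_Tdesc_succ, mul_assoc, mul_assoc, Ring.mul_inverse_cancel _ (isUnit_Tw _),
          mul_one]

theorem stmt7_general (k : ℕ) (hk : 1 ≤ k) (u : F) (σ : ℕ → F) :
    Tw (k + 1) * ((List.range (k - 1)).map (fun i => TT (i + 2) u (σ (k - 1 - i)))).prod *
        Ring.inverse (Tw k) =
      Tw k * ((List.range (k - 1)).map (fun i => TT (i + 1) u (σ (k - 1 - i)))).prod *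
        Ring.inverse (Tw (k - 1)) * T k := by
  obtain ⟨m, rfl⟩ : ∃ m, k = m + 1 := ⟨k - 1, by omega⟩
  simp only [Nat.add_sub_cancel]
  have hshift : SemiconjBy (Tdesc (m + 1))
      ((List.range m).map (fun i => TT (i + 2) u (σ (m - i)))).prod
      ((List.range m).map (fun i => TT (i + 1) u (σ (m - i)))).prod :=
    SemiconjBy.list_prod_map fun i hi =>
      semiconjBy_TT (semiconjBy_Tdesc_T le_add_self (Nat.succ_lt_succ (List.mem_range.mp hi))) _ _
  rw [Tw, mul_assoc (Tw (m + 1)), hshift.eq, mul_assoc, mul_assoc,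
    Tdesc_succ_mul_inverse_Tw_succ, ← mul_assoc, ← mul_assoc]

/-- Lemma 2.1, second identity. For `1 ≤ k < n` and scalar parameters
`u, σ_1, …, σ_{k-1}` with `u ≠ σ_j` for all `j`,
`T_{w_{k+1}} T_2(u,σ_{k-1}) T_3(u,σ_{k-2}) ⋯ T_k(u,σ_1) T_{w_k}⁻¹
  = T_{w_k} T_1(u,σ_{k-1}) T_2(u,σ_{k-2}) ⋯ T_{k-1}(u,σ_1) T_{w_{k-1}}⁻¹ T_k` in `H_n`
(with `T_{w_0} = 1` and empty products equal to `1`). -/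
theorem stmt7 (n k : ℕ) (hk : 1 ≤ k) (hkn : k < n) (u : F) (σ : ℕ → F)
    (hu : ∀ j, 1 ≤ j → j ≤ k - 1 → u ≠ σ j) :
    Tw (k + 1) * ((List.range (k - 1)).map (fun i => TT (i + 2) u (σ (k - 1 - i)))).prod *
        Ring.inverse (Tw k) =
      Tw k * ((List.range (k - 1)).map (fun i => TT (i + 1) u (σ (k - 1 - i)))).prod *
        Ring.inverse (Tw (k - 1)) * T k :=
  stmt7_general k hk u σ

end HeckePaper
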